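/- If for each k ∈ Z[1,N] there exist β > α₁ and constants such that F(k,s) ≥ ((β−ε)/2)s² + C for all s ∈ ℝ (where ε = (β−α₁)/2 and C ∈ ℝ), then J(y) ≥ (ε/2)‖y‖² + NC for all y ∈ E; in particular J is coercive. -/

import Mathlib

open Finset Matrix

/-- Forward difference `Δy(k) = y(k+1) - y(k)`. -/
def fd (y : ℤ → ℝ) (k : ℤ) : ℝ := y (k + 1) - y k

/-- Second forward difference `Δ²y(k) = y(k+2) - 2y(k+1) + y(k)`. -/
def fd2 (y : ℤ → ℝ) (k : ℤ) : ℝ := y (k + 2) - 2 * y (k + 1) + y k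

/-- Dirichlet boundary conditions `y(-1) = y(0) = y(N+1) = y(N+2) = 0`. -/
def bc (N : ℕ) (y : ℤ → ℝ) : Prop :=
  y (-1) = 0 ∧ y 0 = 0 ∧ y ((N : ℤ) + 1) = 0 ∧ y ((N : ℤ) + 2) = 0

/-- `y` satisfies `Δ²(p(k)Δ²y(k-2)) + Δ(q(k)Δy(k-1)) + f(k,y(k)) = 0` for `k ∈ Z[1,N]`. -/
def solves (N : ℕ) (p q : ℤ → ℝ) (f : ℤ → ℝ → ℝ) (y : ℤ → ℝ) : Prop :=
  ∀ k ∈ Finset.Icc (1 : ℤ) (N : ℤ),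
    fd2 (fun j => p j * fd2 y (j - 2)) k
      + fd (fun j => q j * fd y (j - 1)) k + f k (y k) = 0

/-- `F(k,s) = ∫₀ˢ f(k,t) dt`. -/
noncomputable def Fint (f : ℤ → ℝ → ℝ) (k : ℤ) (s : ℝ) : ℝ := ∫ t in (0 : ℝ)..s, f k t

/-- The energy functional
`J(y) = ∑_{k=1}^{N+2} (p(k)/2)(Δ²y(k-2))² − ∑_{k=1}^{N+1} (q(k)/2)(Δy(k-1))² + ∑_{k=1}^{N} F(k,y(k))`. -/
noncomputable def J (N : ℕ) (p q : ℤ → ℝ) (f : ℤ → ℝ → ℝ) (y : ℤ → ℝ) : ℝ :=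
  ∑ k ∈ Finset.Icc (1 : ℤ) ((N : ℤ) + 2), p k / 2 * (fd2 y (k - 2)) ^ 2
    - ∑ k ∈ Finset.Icc (1 : ℤ) ((N : ℤ) + 1), q k / 2 * (fd y (k - 1)) ^ 2
    + ∑ k ∈ Finset.Icc (1 : ℤ) (N : ℤ), Fint f k (y k)

open Matrix

/-- The (N+1)×N first-difference matrix under zero boundary conditions. -/
def Vmat (N : ℕ) : Matrix (Fin (N + 1)) (Fin N) ℝ := fun i j =>
  if (i : ℕ) = (j : ℕ) then 1 else if (i : ℕ) = (j : ℕ) + 1 then -1 else 0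

/-- The (N+2)×N second-difference matrix under zero boundary conditions. -/
def Wmat (N : ℕ) : Matrix (Fin (N + 2)) (Fin N) ℝ := fun i j =>
  if (i : ℕ) = (j : ℕ) then 1
  else if (i : ℕ) = (j : ℕ) + 1 then -2
  else if (i : ℕ) = (j : ℕ) + 2 then 1 else 0

/-- `lam` is the smallest eigenvalue of the matrix `M`. -/
def IsSmallestEigenvalue {n : ℕ} (M : Matrix (Fin n) (Fin n) ℝ) (lam : ℝ) : Prop :=
  IsLeast {μ : ℝ | ∃ x : Fin n → ℝ, x ≠ 0 ∧ M.mulVec x = μ • x} lam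

/-! With `x = (y(1), …, y(N))` and the boundary values of `y` equal to zero, the sums of
`(Δy)²` and `(Δ²y)²` in `J` are `‖Vx‖²` and `‖Wx‖²`. These lie between `λ₁‖x‖²` and `4‖x‖²`,
resp. `λ₂‖x‖²` and `16‖x‖²` (Rayleigh quotient below, `(a - b)² ≤ 2a² + 2b²` above), and the
signs of `q_max` and `p_min` decide which bound applies. Adding the bound on `F` gives
`J(y) ≥ ((β - ε) - α₁)/2 · ‖y‖² + NC = (ε/2)‖y‖² + NC`, and `ε > 0` makes `J` coercive. -/

theorem IsSmallestEigenvalue.mul_dotProduct_le {n : ℕ} {M : Matrix (Fin n) (Fin n) ℝ} {lam : ℝ}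
    (hM : M.IsHermitian) (h : IsSmallestEigenvalue M lam) (x : Fin n → ℝ) :
    lam * (x ⬝ᵥ x) ≤ x ⬝ᵥ M *ᵥ x := by
  -- every eigenvalue of `M - lam • 1` is `μ - lam` for an eigenvalue `μ ≥ lam` of `M`
  have hH : (M - lam • 1).IsHermitian := hM.sub (isHermitian_one.smul (IsSelfAdjoint.all lam))
  have hpsd : (M - lam • 1).PosSemidef := by
    refine hH.posSemidef_iff_eigenvalues_nonneg.mpr fun i => ?_
    have hv := hH.mulVec_eigenvectorBasis i
    rw [sub_mulVec, smul_mulVec, one_mulVec, sub_eq_iff_eq_add, ← add_smul] at hv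
    have : lam ≤ hH.eigenvalues i + lam :=
      h.2 ⟨_, by simpa using (hH.eigenvectorBasis.orthonormal.ne_zero i), hv⟩
    simpa using this
  have := hpsd.dotProduct_mulVec_nonneg x
  simp only [star_trivial, sub_mulVec, smul_mulVec, one_mulVec, dotProduct_sub,
    dotProduct_smul, smul_eq_mul] at this
  linarith

theorem IsSmallestEigenvalue.mul_sum_sq_le {m : Type*} [Fintype m] {n : ℕ}
    {A : Matrix m (Fin n) ℝ} {lam : ℝ} (h : IsSmallestEigenvalue (Aᵀ * A) lam) (x : Fin n → ℝ) :
    lam * ∑ i, x i ^ 2 ≤ ∑ i, (A *ᵥ x) i ^ 2 := by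
  have := h.mul_dotProduct_le (by simpa using isHermitian_conjTranspose_mul_self A) x
  rw [← mulVec_mulVec, dotProduct_mulVec, vecMul_transpose] at this
  simpa [dotProduct, sq] using this

theorem Int.sum_Icc_one_eq_sum_fin {M : Type*} [AddCommMonoid M] (m : ℕ) (g : ℤ → M) :
    ∑ k ∈ Icc (1 : ℤ) m, g k = ∑ i : Fin m, g (i + 1) := by
  rw [Fin.sum_univ_eq_sum_range (fun i : ℕ => g (i + 1))]
  induction m with
  | zero => simp
  | succ n ih =>
    rw [sum_range_succ, ← ih, Nat.cast_succ, ← insert_Icc_right_eq_Icc_add_one (by omega),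
      sum_insert (by simp), add_comm]

theorem Fin.sum_ite_eq_add {M : Type*} [AddCommMonoid M] {n : ℕ} (g : ℕ → M) (i d : ℕ) :
    ∑ j : Fin n, (if i = j + d then g j else 0) = if d ≤ i ∧ i < n + d then g (i - d) else 0 := by
  rw [Fin.sum_univ_eq_sum_range (fun j => if i = j + d then g j else 0)]
  split_ifs with h
  · rw [sum_eq_single_of_mem (i - d) (by simp; omega) (fun j _ hj => if_neg (by omega)),
      if_pos (by omega)]
  · exact sum_eq_zero fun j hj => if_neg (by simp at hj; omega)

section BoundaryValues

variable {N : ℕ} {y : ℤ → ℝ}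

theorem bc.eq_zero (hy : bc N y) {k : ℤ} (h₁ : -1 ≤ k) (h₂ : k ≤ N + 2) (hk : k ∉ Icc 1 (N : ℤ)) :
    y k = 0 := by
  obtain ⟨hm₁, h₀, h₃, h₄⟩ := hy
  simp only [mem_Icc, not_and_or, not_le] at hk
  obtain rfl | rfl | rfl | rfl : k = -1 ∨ k = 0 ∨ k = N + 1 ∨ k = N + 2 := by omega
  all_goals assumption

theorem bc.ite_eq_apply (hy : bc N y) {i d : ℕ} (hi : i ≤ N + 1) (hd : d ≤ 2) :
    (if d ≤ i ∧ i < N + d then y ((i - d : ℕ) + 1) else 0) = y (i - d + 1) := by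
  split_ifs with h
  · push_cast [h.1]; rfl
  · exact (hy.eq_zero (by omega) (by omega) (by simp; omega)).symm

theorem bc.Wmat_mulVec (hy : bc N y) (i : Fin (N + 2)) :
    (Wmat N *ᵥ fun j => y (j + 1)) i = fd2 y (i - 1) := by
  have hentry : ∀ j : Fin N, Wmat N i j * y (j + 1) =
      (if (i : ℕ) = j + 0 then y ((j : ℕ) + 1) else 0)
        + (-2 * (if (i : ℕ) = j + 1 then y ((j : ℕ) + 1) else 0)
        + (if (i : ℕ) = j + 2 then y ((j : ℕ) + 1) else 0)) := by
    intro j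
    simp only [Wmat]
    split_ifs <;> first | omega | ring
  have hi : (i : ℕ) ≤ N + 1 := by omega
  simp only [mulVec, dotProduct, hentry, sum_add_distrib, ← mul_sum,
    Fin.sum_ite_eq_add (fun j : ℕ => y (j + 1)), hy.ite_eq_apply hi zero_le_two,
    hy.ite_eq_apply hi one_le_two, hy.ite_eq_apply hi le_rfl, fd2]
  ring_nf

theorem bc.Vmat_mulVec (hy : bc N y) (i : Fin (N + 1)) :
    (Vmat N *ᵥ fun j => y (j + 1)) i = fd y i := by
  have hentry : ∀ j : Fin N, Vmat N i j * y (j + 1) =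
      (if (i : ℕ) = j + 0 then y ((j : ℕ) + 1) else 0)
        - (if (i : ℕ) = j + 1 then y ((j : ℕ) + 1) else 0) := by
    intro j
    simp only [Vmat]
    split_ifs <;> first | omega | ring
  have hi : (i : ℕ) ≤ N + 1 := by omega
  simp only [mulVec, dotProduct, hentry, sum_sub_distrib,
    Fin.sum_ite_eq_add (fun j : ℕ => y (j + 1)), hy.ite_eq_apply hi zero_le_two,
    hy.ite_eq_apply hi one_le_two, fd]
  ring_nf

theorem bc.sum_sq_fd2_eq (hy : bc N y) :
    ∑ k ∈ Icc (1 : ℤ) (N + 2), fd2 y (k - 2) ^ 2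
      = ∑ i, (Wmat N *ᵥ fun j => y (j + 1)) i ^ 2 := by
  rw [show (N : ℤ) + 2 = (N + 2 : ℕ) by push_cast; rfl, Int.sum_Icc_one_eq_sum_fin]
  refine sum_congr rfl fun i _ => ?_
  rw [hy.Wmat_mulVec]
  ring_nf

theorem bc.sum_sq_fd_eq (hy : bc N y) :
    ∑ k ∈ Icc (1 : ℤ) (N + 1), fd y (k - 1) ^ 2
      = ∑ i, (Vmat N *ᵥ fun j => y (j + 1)) i ^ 2 := by
  rw [show (N : ℤ) + 1 = (N + 1 : ℕ) by push_cast; rfl, Int.sum_Icc_one_eq_sum_fin]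
  simp only [hy.Vmat_mulVec, add_sub_cancel_right]

theorem bc.sum_sq_comp_sub (hy : bc N y) {c m : ℤ} (hc : 0 ≤ c) (hcm : c ≤ m) (hm : m ≤ 2) :
    ∑ k ∈ Icc (1 : ℤ) (N + m), y (k - c) ^ 2 = ∑ k ∈ Icc (1 : ℤ) N, y k ^ 2 := by
  have hshift : Icc (1 : ℤ) (N + m) = (Icc (1 - c) (N + m - c)).map (addRightEmbedding c) := by
    rw [map_add_right_Icc, sub_add_cancel, sub_add_cancel]
  rw [hshift, sum_map]
  simp only [addRightEmbedding_apply, add_sub_cancel_right]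
  refine (sum_subset (Icc_subset_Icc (by omega) (by omega)) fun k hk hk' => ?_).symm
  rw [mem_Icc] at hk
  rw [hy.eq_zero (by omega) (by omega) hk', sq, mul_zero]

theorem bc.sum_sq_fd_le (hy : bc N y) :
    ∑ k ∈ Icc (1 : ℤ) (N + 1), fd y (k - 1) ^ 2 ≤ 4 * ∑ k ∈ Icc (1 : ℤ) N, y k ^ 2 :=
  calc ∑ k ∈ Icc (1 : ℤ) (N + 1), fd y (k - 1) ^ 2
      ≤ ∑ k ∈ Icc (1 : ℤ) (N + 1), (2 * y (k - 0) ^ 2 + 2 * y (k - 1) ^ 2) := by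
        refine sum_le_sum fun k _ => ?_
        simp only [fd, sub_add_cancel, sub_zero]
        nlinarith [sq_nonneg (y k + y (k - 1))]
    _ = 4 * ∑ k ∈ Icc (1 : ℤ) N, y k ^ 2 := by
        rw [sum_add_distrib, ← mul_sum, ← mul_sum, hy.sum_sq_comp_sub le_rfl (by omega) (by omega),
          hy.sum_sq_comp_sub zero_le_one le_rfl (by omega)]
        ring

theorem bc.sum_sq_fd2_le (hy : bc N y) :
    ∑ k ∈ Icc (1 : ℤ) (N + 2), fd2 y (k - 2) ^ 2 ≤ 16 * ∑ k ∈ Icc (1 : ℤ) N, y k ^ 2 :=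
  calc ∑ k ∈ Icc (1 : ℤ) (N + 2), fd2 y (k - 2) ^ 2
      ≤ ∑ k ∈ Icc (1 : ℤ) (N + 2), (4 * y (k - 0) ^ 2 + 8 * y (k - 1) ^ 2 + 4 * y (k - 2) ^ 2) := by
        refine sum_le_sum fun k _ => ?_
        rw [fd2, sub_add_cancel, sub_zero, show k - 2 + 1 = k - 1 by ring]
        -- Cauchy–Schwarz with weights `1, 2, 1`
        nlinarith [sq_nonneg (y k + y (k - 1)), sq_nonneg (y (k - 1) + y (k - 2)),
          sq_nonneg (y k - y (k - 2))]
    _ = 16 * ∑ k ∈ Icc (1 : ℤ) N, y k ^ 2 := by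
        rw [sum_add_distrib, sum_add_distrib, ← mul_sum, ← mul_sum, ← mul_sum,
          hy.sum_sq_comp_sub le_rfl (by omega) (by omega),
          hy.sum_sq_comp_sub zero_le_one (by omega) le_rfl,
          hy.sum_sq_comp_sub zero_le_two le_rfl le_rfl]
        ring

end BoundaryValues

theorem mul_sum_le_sum_mul_of_le {ι : Type*} {s : Finset ι} {w t : ι → ℝ} {a : ℝ}
    (hw : ∀ i ∈ s, a ≤ w i) (ht : ∀ i ∈ s, 0 ≤ t i) : a * ∑ i ∈ s, t i ≤ ∑ i ∈ s, w i * t i := by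
  rw [mul_sum]
  exact sum_le_sum fun i hi => mul_le_mul_of_nonneg_right (hw i hi) (ht i hi)

theorem sum_mul_le_mul_sum_of_le {ι : Type*} {s : Finset ι} {w t : ι → ℝ} {a : ℝ}
    (hw : ∀ i ∈ s, w i ≤ a) (ht : ∀ i ∈ s, 0 ≤ t i) : ∑ i ∈ s, w i * t i ≤ a * ∑ i ∈ s, t i := by
  rw [mul_sum]
  exact sum_le_sum fun i hi => mul_le_mul_of_nonneg_right (hw i hi) (ht i hi)

theorem ite_mul_mul_le_mul {a lo hi S T : ℝ} (hlo : lo * S ≤ T) (hhi : T ≤ hi * S) :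
    (if 0 ≤ a then lo else hi) * a * S ≤ a * T := by
  split_ifs with ha
  · nlinarith
  · nlinarith

theorem mul_le_ite_mul_mul {a lo hi S T : ℝ} (hlo : lo * S ≤ T) (hhi : T ≤ hi * S) :
    a * T ≤ (if a < 0 then lo else hi) * a * S := by
  split_ifs with ha
  · nlinarith
  · nlinarith

section Energy

variable {N : ℕ} {y : ℤ → ℝ}

theorem bc.mul_sum_sq_le_sum_sq_fd (hy : bc N y) {lam : ℝ}
    (hlam : IsSmallestEigenvalue ((Vmat N)ᵀ * Vmat N) lam) :
    lam * ∑ k ∈ Icc (1 : ℤ) N, y k ^ 2 ≤ ∑ k ∈ Icc (1 : ℤ) (N + 1), fd y (k - 1) ^ 2 := by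
  rw [hy.sum_sq_fd_eq, Int.sum_Icc_one_eq_sum_fin]
  exact hlam.mul_sum_sq_le _

theorem bc.mul_sum_sq_le_sum_sq_fd2 (hy : bc N y) {lam : ℝ}
    (hlam : IsSmallestEigenvalue ((Wmat N)ᵀ * Wmat N) lam) :
    lam * ∑ k ∈ Icc (1 : ℤ) N, y k ^ 2 ≤ ∑ k ∈ Icc (1 : ℤ) (N + 2), fd2 y (k - 2) ^ 2 := by
  rw [hy.sum_sq_fd2_eq, Int.sum_Icc_one_eq_sum_fin]
  exact hlam.mul_sum_sq_le _

theorem sum_Fint_ge {f : ℤ → ℝ → ℝ} {a C : ℝ}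
    (hF : ∀ k ∈ Icc (1 : ℤ) N, ∀ s : ℝ, a / 2 * s ^ 2 + C ≤ Fint f k s) :
    a / 2 * ∑ k ∈ Icc (1 : ℤ) N, y k ^ 2 + N * C ≤ ∑ k ∈ Icc (1 : ℤ) N, Fint f k (y k) :=
  calc a / 2 * ∑ k ∈ Icc (1 : ℤ) N, y k ^ 2 + N * C
      = ∑ k ∈ Icc (1 : ℤ) N, (a / 2 * y k ^ 2 + C) := by
        rw [sum_add_distrib, ← mul_sum, sum_const, Int.card_Icc, add_sub_cancel_right,
          Int.toNat_natCast, nsmul_eq_mul]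
    _ ≤ ∑ k ∈ Icc (1 : ℤ) N, Fint f k (y k) := sum_le_sum fun k hk => hF k hk (y k)

theorem bc.J_ge (hy : bc N y) {p q : ℤ → ℝ} {f : ℤ → ℝ → ℝ} {lam1 lam2 pmin qmax a C : ℝ}
    (hlam1 : IsSmallestEigenvalue ((Vmat N)ᵀ * Vmat N) lam1)
    (hlam2 : IsSmallestEigenvalue ((Wmat N)ᵀ * Wmat N) lam2)
    (hpmin : IsLeast (p '' Set.Icc (1 : ℤ) ((N : ℤ) + 2)) pmin)
    (hqmax : IsGreatest (q '' Set.Icc (1 : ℤ) ((N : ℤ) + 1)) qmax)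
    (hF : ∀ k ∈ Icc (1 : ℤ) N, ∀ s : ℝ, a / 2 * s ^ 2 + C ≤ Fint f k s) :
    ((if 0 ≤ pmin then lam2 else 16) * pmin - (if qmax < 0 then lam1 else 4) * qmax + a) / 2
        * ∑ k ∈ Icc (1 : ℤ) N, y k ^ 2 + N * C ≤ J N p q f y := by
  have hp : (if 0 ≤ pmin then lam2 else 16) * pmin * ∑ k ∈ Icc (1 : ℤ) N, y k ^ 2
      ≤ ∑ k ∈ Icc (1 : ℤ) (N + 2), p k * fd2 y (k - 2) ^ 2 :=
    (ite_mul_mul_le_mul (hy.mul_sum_sq_le_sum_sq_fd2 hlam2) hy.sum_sq_fd2_le).trans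
      (mul_sum_le_sum_mul_of_le (fun k hk => hpmin.2 ⟨k, by simpa using hk, rfl⟩)
        fun _ _ => sq_nonneg _)
  have hq : ∑ k ∈ Icc (1 : ℤ) (N + 1), q k * fd y (k - 1) ^ 2
      ≤ (if qmax < 0 then lam1 else 4) * qmax * ∑ k ∈ Icc (1 : ℤ) N, y k ^ 2 :=
    (sum_mul_le_mul_sum_of_le (fun k hk => hqmax.2 ⟨k, by simpa using hk, rfl⟩)
        fun _ _ => sq_nonneg _).trans
      (mul_le_ite_mul_mul (hy.mul_sum_sq_le_sum_sq_fd hlam1) hy.sum_sq_fd_le)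
  have hhalf : ∀ (s : Finset ℤ) (w t : ℤ → ℝ), ∑ k ∈ s, w k / 2 * t k = (∑ k ∈ s, w k * t k) / 2 :=
    fun s w t => by rw [sum_div]; exact sum_congr rfl fun k _ => by ring
  have hFsum := sum_Fint_ge (y := y) hF
  rw [_root_.J, hhalf, hhalf]
  linarith

end Energy

theorem stmt_15_general (N : ℕ) (p q : ℤ → ℝ) (f : ℤ → ℝ → ℝ)
    (lam1 lam2 : ℝ)
    (hlam1 : IsSmallestEigenvalue ((Vmat N)ᵀ * Vmat N) lam1)
    (hlam2 : IsSmallestEigenvalue ((Wmat N)ᵀ * Wmat N) lam2)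
    (pmin qmax : ℝ)
    (hpmin : IsLeast (p '' Set.Icc (1 : ℤ) ((N : ℤ) + 2)) pmin)
    (hqmax : IsGreatest (q '' Set.Icc (1 : ℤ) ((N : ℤ) + 1)) qmax)
    (alpha1 : ℝ)
    (halpha1 : alpha1 = (if qmax < 0 then lam1 else 4) * qmax
        - (if 0 ≤ pmin then lam2 else 16) * pmin)
    (beta eps C : ℝ) (hbeta : alpha1 < beta) (heps : eps = (beta - alpha1) / 2)
    (hF : ∀ k ∈ Finset.Icc (1 : ℤ) (N : ℤ), ∀ s : ℝ,
      (beta - eps) / 2 * s ^ 2 + C ≤ Fint f k s) :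
    (∀ y : ℤ → ℝ, bc N y →
        eps / 2 * ∑ k ∈ Finset.Icc (1 : ℤ) (N : ℤ), (y k) ^ 2 + N * C
          ≤ J N p q f y)
      ∧ ∀ C' : ℝ, ∃ R : ℝ, ∀ y : ℤ → ℝ, bc N y →
          R ≤ ∑ k ∈ Finset.Icc (1 : ℤ) (N : ℤ), (y k) ^ 2 → C' ≤ J N p q f y := by
  have hcoeff : ((if 0 ≤ pmin then lam2 else 16) * pmin - (if qmax < 0 then lam1 else 4) * qmax
      + (beta - eps)) / 2 = eps / 2 := by
    rw [heps, halpha1]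
    ring
  have hJ : ∀ y : ℤ → ℝ, bc N y →
      eps / 2 * ∑ k ∈ Icc (1 : ℤ) N, y k ^ 2 + N * C ≤ J N p q f y := fun y hy =>
    hcoeff ▸ hy.J_ge hlam1 hlam2 hpmin hqmax hF
  have heps_half : 0 < eps / 2 := by linarith
  refine ⟨hJ, fun C' => ⟨(C' - N * C) / (eps / 2), fun y hy hR => ?_⟩⟩
  have := mul_le_mul_of_nonneg_left hR heps_half.le
  rw [mul_div_cancel₀ _ heps_half.ne'] at this
  linarith [hJ y hy]

/-- If `F(k,s) ≥ ((β−ε)/2)s² + C` for all `s`, with `β > α₁` and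
`ε = (β−α₁)/2`, then `J(y) ≥ (ε/2)‖y‖² + NC` for all `y ∈ E`; in particular `J`
is coercive. -/
theorem stmt_15 (N : ℕ) (hN : 1 ≤ N) (p q : ℤ → ℝ) (f : ℤ → ℝ → ℝ)
    (hf : ∀ k ∈ Finset.Icc (1 : ℤ) (N : ℤ), Continuous (f k))
    (lam1 lam2 : ℝ)
    (hlam1 : IsSmallestEigenvalue ((Vmat N)ᵀ * Vmat N) lam1)
    (hlam2 : IsSmallestEigenvalue ((Wmat N)ᵀ * Wmat N) lam2)
    (pmin qmax : ℝ)
    (hpmin : IsLeast (p '' Set.Icc (1 : ℤ) ((N : ℤ) + 2)) pmin)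
    (hqmax : IsGreatest (q '' Set.Icc (1 : ℤ) ((N : ℤ) + 1)) qmax)
    (alpha1 : ℝ)
    (halpha1 : alpha1 = (if qmax < 0 then lam1 else 4) * qmax
        - (if 0 ≤ pmin then lam2 else 16) * pmin)
    (beta eps C : ℝ) (hbeta : alpha1 < beta) (heps : eps = (beta - alpha1) / 2)
    (hF : ∀ k ∈ Finset.Icc (1 : ℤ) (N : ℤ), ∀ s : ℝ,
      (beta - eps) / 2 * s ^ 2 + C ≤ Fint f k s) :
    (∀ y : ℤ → ℝ, bc N y →
        eps / 2 * ∑ k ∈ Finset.Icc (1 : ℤ) (N : ℤ), (y k) ^ 2 + N * C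
          ≤ J N p q f y)
      ∧ ∀ C' : ℝ, ∃ R : ℝ, ∀ y : ℤ → ℝ, bc N y →
          R ≤ ∑ k ∈ Finset.Icc (1 : ℤ) (N : ℤ), (y k) ^ 2 → C' ≤ J N p q f y :=
  stmt_15_general N p q f lam1 lam2 hlam1 hlam2 pmin qmax hpmin hqmax alpha1 halpha1 beta eps C
    hbeta heps hF
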